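/- For any upset α and any finite sets Γ, Δ of formulas: the argument ⟨Γ, Δ⟩ is α-preservation valid if and only if ⟨¬Δ, ¬Γ⟩ is α*-preservation valid, where α* = [0,1] \ {x : 1−x ∈ α} is the dual upset. -/
import Mathlib


/-- Propositional formulas: atoms, negation, disjunction. -/
inductive Fml : Type
  | atom : ℕ → Fml
  | neg : Fml → Fml
  | or : Fml → Fml → Fml
deriving DecidableEq

namespace Fml

def and (φ ψ : Fml) : Fml := neg (or (neg φ) (neg ψ))

def bot : Fml := and (atom 0) (neg (atom 0))

def imp (φ ψ : Fml) : Fml := or (neg φ) ψ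

def eval (v : ℕ → Bool) : Fml → Bool
  | atom n => v n
  | neg φ => !(eval v φ)
  | or φ ψ => (eval v φ) || (eval v ψ)

end Fml

/-- Two formulas are jointly classically unsatisfiable. -/
def Incompatible (φ ψ : Fml) : Prop :=
  ∀ v : ℕ → Bool, ¬(φ.eval v = true ∧ ψ.eval v = true)

/-- Classical (Set-Set) validity. -/
def ClValid (Γ Δ : Finset Fml) : Prop :=
  ∀ v : ℕ → Bool, (∀ γ ∈ Γ, γ.eval v = true) → ∃ δ ∈ Δ, δ.eval v = true

/-- Classical single-conclusion entailment. -/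
def ClEntails (Γ : Finset Fml) (φ : Fml) : Prop :=
  ∀ v : ℕ → Bool, (∀ γ ∈ Γ, γ.eval v = true) → φ.eval v = true

def ClConsistent (Γ : Finset Fml) : Prop :=
  ∃ v : ℕ → Bool, ∀ γ ∈ Γ, γ.eval v = true

def Tautology (φ : Fml) : Prop := ∀ v : ℕ → Bool, φ.eval v = true

/-- A probability distribution on formulas. -/
structure ProbDist where
  p : Fml → ℝ
  nonneg : ∀ φ, 0 ≤ p φ
  le_one : ∀ φ, p φ ≤ 1
  bot_eq : p Fml.bot = 0
  neg_eq : ∀ φ, p (Fml.neg φ) = 1 - p φ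
  add_eq : ∀ φ ψ, Incompatible φ ψ → p (Fml.or φ ψ) = p φ + p ψ

/-- A probabilistic model: worlds with classical valuations and a finitely
additive probability measure on subsets of worlds. -/
structure PModel where
  W : Type
  nonempty : Nonempty W
  val : W → ℕ → Bool
  μ : Set W → ℝ
  nonneg : ∀ A : Set W, 0 ≤ μ A
  empty_eq : μ (∅ : Set W) = 0
  univ_eq : μ (Set.univ : Set W) = 1
  add_eq : ∀ A B : Set W, Disjoint A B → μ (A ∪ B) = μ A + μ B

/-- Denotation of a formula in a model. -/
def PModel.den (M : PModel) (φ : Fml) : Set M.W := {w | φ.eval (M.val w) = true}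

/-- Induced probability of a formula in a model. -/
def PModel.prob (M : PModel) (φ : Fml) : ℝ := M.μ (M.den φ)

/-- An upset of [0,1]: contains 1, excludes 0, upward closed within [0,1]. -/
def IsUpset (α : Set ℝ) : Prop :=
  α ⊆ Set.Icc 0 1 ∧ (1 : ℝ) ∈ α ∧ (0 : ℝ) ∉ α ∧
    ∀ x ∈ α, ∀ y ∈ Set.Icc (0:ℝ) 1, x ≤ y → y ∈ α

/-- The mirror image of α. -/
def mirror (α : Set ℝ) : Set ℝ := {x ∈ Set.Icc (0:ℝ) 1 | 1 - x ∈ α}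

/-- The dual of α. -/
def dual (α : Set ℝ) : Set ℝ := Set.Icc (0:ℝ) 1 \ mirror α

/-- Conjunction of a finite set of formulas. -/
noncomputable def conj (Γ : Finset Fml) : Fml := Γ.toList.foldr Fml.and (Fml.neg Fml.bot)

/-- Disjunction of a finite set of formulas. -/
noncomputable def disj (Δ : Finset Fml) : Fml := Δ.toList.foldr Fml.or Fml.bot

/-- Disjunction of a list of formulas. -/
def disjList (l : List Fml) : Fml := l.foldr Fml.or Fml.bot

/-- α-preservation validity (over probability distributions). -/
def PresValid (α : Set ℝ) (Γ Δ : Finset Fml) : Prop :=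
  ∀ P : ProbDist, (∀ γ ∈ Γ, P.p γ ∈ α) → ∃ δ ∈ Δ, P.p δ ∈ α

/-- α-preservation validity (over probabilistic models). -/
def PresValidM (α : Set ℝ) (Γ Δ : Finset Fml) : Prop :=
  ∀ M : PModel, (∀ γ ∈ Γ, M.prob γ ∈ α) → ∃ δ ∈ Δ, M.prob δ ∈ α

/-- α-symmetric validity. -/
def SymValid (α : Set ℝ) (Γ Δ : Finset Fml) : Prop :=
  ∀ P : ProbDist, (∀ γ ∈ Γ, P.p γ ∈ α) → ∃ δ ∈ Δ, P.p δ ∉ mirror α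

/-- α-satisfiability of a finite set of formulas. -/
def Satis (α : Set ℝ) (Γ : Finset Fml) : Prop :=
  ∃ P : ProbDist, ∀ γ ∈ Γ, P.p γ ∈ α

lemma neg_mem_dual (α : Set ℝ) (P : ProbDist) (φ : Fml) :
    P.p (Fml.neg φ) ∈ dual α ↔ P.p φ ∉ α := by
  simp only [dual, mirror, Set.mem_diff, Set.mem_setOf_eq, Set.mem_Icc, P.neg_eq]
  constructor
  · rintro ⟨_, h⟩ hmem
    exact h ⟨⟨by linarith [P.le_one φ], by linarith [P.nonneg φ]⟩, by simpa using hmem⟩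
  · intro h
    refine ⟨⟨by linarith [P.le_one φ], by linarith [P.nonneg φ]⟩, ?_⟩
    rintro ⟨_, h2⟩
    exact h (by simpa using h2)

/-- ⟨Γ,Δ⟩ is α-preservation valid iff ⟨¬Δ,¬Γ⟩ is α*-preservation valid. -/
theorem stmt4 (α : Set ℝ) (hα : IsUpset α) (Γ Δ : Finset Fml) :
    PresValid α Γ Δ ↔ PresValid (dual α) (Δ.image Fml.neg) (Γ.image Fml.neg) := by
  constructor
  · intro h P hΔ
    by_contra hc
    push_neg at hc
    have hγ : ∀ γ ∈ Γ, P.p γ ∈ α := by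
      intro γ hγ
      by_contra hn
      exact hc _ (Finset.mem_image_of_mem _ hγ) ((neg_mem_dual α P γ).mpr hn)
    obtain ⟨δ, hδ, hδα⟩ := h P hγ
    have := hΔ _ (Finset.mem_image_of_mem Fml.neg hδ)
    exact (neg_mem_dual α P δ).mp this hδα
  · intro h P hΓ
    by_contra hc
    push_neg at hc
    have hδ : ∀ ψ ∈ Δ.image Fml.neg, P.p ψ ∈ dual α := by
      intro ψ hψ
      obtain ⟨δ, hδ, rfl⟩ := Finset.mem_image.mp hψ
      exact (neg_mem_dual α P δ).mpr (hc _ hδ)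
    obtain ⟨ψ, hψ, hψd⟩ := h P hδ
    obtain ⟨γ, hγ, rfl⟩ := Finset.mem_image.mp hψ
    exact (neg_mem_dual α P γ).mp hψd (hΓ _ hγ)
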